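/- Let G be a finite abelian group, Γ a set of d characters, δ ∈ (0,1], l ∈ ℕ, and η ∈ (0,1]. Then there exist δ* ∈ [δ/2, δ] and δ' ≥ c·δη/(l·d) (for an absolute constant c > 0) such that μ_G(B(Γ,δ*) + l·B(Γ,δ')) ≤ (1+η)·μ_G(B(Γ,δ*)) and l·B(Γ,δ') ⊆ B(Γ,δ*). -/

import Mathlib

open scoped Classical Pointwise

/-- `l`-fold iterated sumset `l·B = B + ⋯ + B`. -/
def iterSumset {G : Type*} [AddCommGroup G] (s : Set G) : ℕ → Set G
  | 0 => {0}
  | n + 1 => s + iterSumset s n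

/-!
A Bohr set at most doubles its width at the cost of a factor `81 ^ |Γ|` in size: quantizing each
`γ x - 1` to a `δ/4`-grid of the plane splits `B(Γ, δ)` into `81 ^ |Γ|` classes, each a translate of
a subset of `B(Γ, δ/2)`. Hence along the `N ≍ |Γ|/η` equally spaced widths between `δ/2` and `δ`
some step of size `ρ = δ/(2N)` enlarges the Bohr set by a factor at most `1 + η`; at that width
`δ*` take `δ' = ρ/(l+1)`, so that `l·B(Γ, δ') ⊆ B(Γ, ρ)` by the triangle inequality for characters,
and `B(Γ, δ*) + l·B(Γ, δ') ⊆ B(Γ, δ* + ρ)`.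
-/

namespace AddChar

variable {G : Type*} [AddCommGroup G] [Finite G]

lemma norm_apply_add_sub_one_le (γ : AddChar G ℂ) (a b : G) :
    ‖γ (a + b) - 1‖ ≤ ‖γ a - 1‖ + ‖γ b - 1‖ :=
  calc ‖γ (a + b) - 1‖ = ‖(γ a - 1) * γ b + (γ b - 1)‖ := by
        rw [map_add_eq_mul]; ring_nf
    _ ≤ ‖(γ a - 1) * γ b‖ + ‖γ b - 1‖ := norm_add_le _ _
    _ = ‖γ a - 1‖ + ‖γ b - 1‖ := by rw [norm_mul, norm_apply, mul_one]

lemma norm_apply_sub_sub_one (γ : AddChar G ℂ) (x y : G) :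
    ‖γ (x - y) - 1‖ = ‖γ x - γ y‖ := by
  have hx : γ x = γ (x - y) * γ y := by rw [← map_add_eq_mul, sub_add_cancel]
  rw [hx, ← sub_one_mul, norm_mul, norm_apply, mul_one]

end AddChar

noncomputable def complexGridCell (t : ℝ) (z : ℂ) : ℤ × ℤ :=
  (⌊z.re / t⌋, ⌊z.im / t⌋)

lemma floor_div_mem_Icc_of_abs_le {a t : ℝ} (ht : 0 < t) {n : ℤ} (h : |a| ≤ n * t) :
    ⌊a / t⌋ ∈ Finset.Icc (-n) n := by
  rw [abs_le] at h
  rw [Finset.mem_Icc, Int.le_floor, Int.floor_le_iff, le_div_iff₀ ht, div_lt_iff₀ ht]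
  push_cast
  constructor <;> linarith

lemma complexGridCell_mem_of_norm_le {t : ℝ} (ht : 0 < t) {n : ℤ} {z : ℂ} (h : ‖z‖ ≤ n * t) :
    complexGridCell t z ∈ Finset.Icc (-n) n ×ˢ Finset.Icc (-n) n :=
  Finset.mem_product.2
    ⟨floor_div_mem_Icc_of_abs_le ht ((Complex.abs_re_le_norm z).trans h),
      floor_div_mem_Icc_of_abs_le ht ((Complex.abs_im_le_norm z).trans h)⟩

lemma norm_sub_lt_of_complexGridCell_eq {t : ℝ} (ht : 0 < t) {z w : ℂ}
    (h : complexGridCell t z = complexGridCell t w) : ‖z - w‖ < 2 * t := by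
  obtain ⟨hre, him⟩ := Prod.mk.inj h
  have hre' := Int.abs_sub_lt_one_of_floor_eq_floor hre
  have him' := Int.abs_sub_lt_one_of_floor_eq_floor him
  rw [div_sub_div_same, abs_div, abs_of_pos ht, div_lt_one ht] at hre' him'
  calc ‖z - w‖ ≤ |(z - w).re| + |(z - w).im| := Complex.norm_le_abs_re_add_abs_im _
    _ < t + t := by simpa only [Complex.sub_re, Complex.sub_im] using add_lt_add hre' him'
    _ = 2 * t := by ring

section BohrSet

variable {G : Type*} [AddCommGroup G]

def bohrSet (Γ : Finset (AddChar G ℂ)) (w : ℝ) : Set G :=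
  {x | ∀ γ ∈ Γ, ‖γ x - 1‖ ≤ w}

variable {Γ : Finset (AddChar G ℂ)}

lemma bohrSet_mono {v w : ℝ} (h : v ≤ w) : bohrSet Γ v ⊆ bohrSet Γ w :=
  fun _ hx γ hγ => (hx γ hγ).trans h

lemma zero_mem_bohrSet {w : ℝ} (hw : 0 ≤ w) : (0 : G) ∈ bohrSet Γ w := by
  intro γ _
  simpa using hw

variable [Finite G]

lemma bohrSet_add_bohrSet_subset (v w : ℝ) :
    bohrSet Γ v + bohrSet Γ w ⊆ bohrSet Γ (v + w) := by
  rintro _ ⟨a, ha, b, hb, rfl⟩ γ hγ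
  exact (γ.norm_apply_add_sub_one_le a b).trans (add_le_add (ha γ hγ) (hb γ hγ))

lemma iterSumset_bohrSet_subset (w : ℝ) (n : ℕ) :
    iterSumset (bohrSet Γ w) n ⊆ bohrSet Γ (n * w) := by
  induction n with
  | zero => simpa [iterSumset] using zero_mem_bohrSet le_rfl
  | succ n ih =>
    calc iterSumset (bohrSet Γ w) (n + 1) ⊆ bohrSet Γ w + bohrSet Γ (n * w) :=
          Set.add_subset_add_left ih
      _ ⊆ bohrSet Γ (w + n * w) := bohrSet_add_bohrSet_subset _ _
      _ = bohrSet Γ ((n + 1 : ℕ) * w) := by push_cast; ring_nf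

lemma natCard_bohrSet_le_pow_mul {δ : ℝ} (hδ : 0 < δ) :
    Nat.card (bohrSet Γ δ) ≤ 81 ^ Γ.card * Nat.card (bohrSet Γ (δ / 2)) := by
  have : Fintype G := Fintype.ofFinite G
  have ht : 0 < δ / 4 := by positivity
  let cell : G → (Γ → ℤ × ℤ) := fun x γ => complexGridCell (δ / 4) (γ.1 x - 1)
  have hcell : ∀ x ∈ (bohrSet Γ δ).toFinset, cell x ∈
      Fintype.piFinset fun _ : Γ => Finset.Icc (-4) 4 ×ˢ Finset.Icc (-4) 4 := by
    intro x hx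
    rw [Set.mem_toFinset] at hx
    exact Fintype.mem_piFinset.2 fun γ =>
      complexGridCell_mem_of_norm_le ht ((hx γ.1 γ.2).trans (by push_cast; linarith))
  have hfiber : ∀ c, {x ∈ (bohrSet Γ δ).toFinset | cell x = c}.card ≤
      Nat.card (bohrSet Γ (δ / 2)) := by
    intro c
    obtain hempty | ⟨x₀, hx₀⟩ :=
      Finset.eq_empty_or_nonempty {x ∈ (bohrSet Γ δ).toFinset | cell x = c}
    · simp [hempty]
    rw [Nat.card_eq_card_toFinset]
    refine Finset.card_le_card_of_injOn (· - x₀) (fun x hx => ?_) sub_left_injective.injOn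
    rw [Finset.mem_coe, Set.mem_toFinset]
    intro γ hγ
    rw [AddChar.norm_apply_sub_sub_one, ← sub_sub_sub_cancel_right _ _ 1]
    have hcx : cell x = cell x₀ :=
      (Finset.mem_filter.1 hx).2.trans (Finset.mem_filter.1 hx₀).2.symm
    have := norm_sub_lt_of_complexGridCell_eq ht (congrFun hcx ⟨γ, hγ⟩)
    linarith
  calc Nat.card (bohrSet Γ δ) = (bohrSet Γ δ).toFinset.card := Nat.card_eq_card_toFinset _
    _ ≤ Nat.card (bohrSet Γ (δ / 2)) * (Fintype.piFinset fun _ : Γ =>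
          Finset.Icc (-4 : ℤ) 4 ×ˢ Finset.Icc (-4 : ℤ) 4).card :=
        Finset.card_le_mul_card_image_of_maps_to hcell _ fun c _ => hfiber c
    _ = 81 ^ Γ.card * Nat.card (bohrSet Γ (δ / 2)) := by
        rw [mul_comm, Fintype.card_piFinset, Finset.prod_const, Finset.card_univ,
          Fintype.card_coe, Finset.card_product, Int.card_Icc]
        rfl

end BohrSet

lemma exists_succ_le_mul_of_lt_pow_mul {g : ℕ → ℝ} {r : ℝ} (hr : 0 < r) :
    ∀ N, g N < r ^ N * g 0 → ∃ j < N, g (j + 1) ≤ r * g j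
  | 0, h => by simp at h
  | N + 1, h => by
    by_cases hN : g (N + 1) ≤ r * g N
    · exact ⟨N, N.lt_succ_self, hN⟩
    · have : r * g N < r * (r ^ N * g 0) := by
        rw [← mul_assoc, ← pow_succ']; exact (not_le.1 hN).trans h
      obtain ⟨j, hj, hgj⟩ :=
        exists_succ_le_mul_of_lt_pow_mul hr N (lt_of_mul_lt_mul_left this hr.le)
      exact ⟨j, hj.trans N.lt_succ_self, hgj⟩

lemma exists_natCard_bohrSet_step_le {G : Type*} [AddCommGroup G] [Finite G]
    (Γ : Finset (AddChar G ℂ)) {δ η : ℝ} (hδ : 0 < δ) (hη : 0 ≤ η) {N : ℕ}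
    (hN : (81 : ℝ) ^ Γ.card < (1 + η) ^ N) :
    ∃ j < N, (Nat.card (bohrSet Γ (δ / 2 + (j + 1) * (δ / (2 * N)))) : ℝ) ≤
      (1 + η) * Nat.card (bohrSet Γ (δ / 2 + j * (δ / (2 * N)))) := by
  let g : ℕ → ℝ := fun j => Nat.card (bohrSet Γ (δ / 2 + j * (δ / (2 * (N : ℝ)))))
  have hg0_eq : g 0 = Nat.card (bohrSet Γ (δ / 2)) := by simp [g]
  have hg0 : 0 < g 0 := by
    have : Nonempty (bohrSet Γ (δ / 2)) := ⟨⟨0, zero_mem_bohrSet (by positivity)⟩⟩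
    rw [hg0_eq]
    exact_mod_cast Nat.card_pos
  have hgN : g N ≤ 81 ^ Γ.card * g 0 := by
    have hwidth : δ / 2 + N * (δ / (2 * N)) ≤ δ := by
      rcases N.eq_zero_or_pos with rfl | hN0
      · simp only [CharP.cast_eq_zero, zero_mul, add_zero]; linarith
      · field_simp; linarith
    calc g N ≤ Nat.card (bohrSet Γ δ) := by
          simp only [g]
          exact_mod_cast Nat.card_mono (Set.toFinite _) (bohrSet_mono hwidth)
      _ ≤ 81 ^ Γ.card * Nat.card (bohrSet Γ (δ / 2)) := by
          exact_mod_cast natCard_bohrSet_le_pow_mul hδ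
      _ = 81 ^ Γ.card * g 0 := by rw [hg0_eq]
  have := exists_succ_le_mul_of_lt_pow_mul (by linarith) N
    (hgN.trans_lt (mul_lt_mul_of_pos_right hN hg0))
  simpa [g] using this

lemma two_le_one_add_pow_natCeil_inv {η : ℝ} (hη : 0 < η) : 2 ≤ (1 + η) ^ ⌈η⁻¹⌉₊ := by
  have h := Nat.le_ceil η⁻¹
  have : 1 ≤ (⌈η⁻¹⌉₊ : ℝ) * η := by rwa [← div_le_iff₀ hη, one_div]
  linarith [one_add_mul_le_pow (a := η) (by linarith) ⌈η⁻¹⌉₊]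

lemma natCeil_inv_mul_le_two {η : ℝ} (hη0 : 0 < η) (hη1 : η ≤ 1) : (⌈η⁻¹⌉₊ : ℝ) * η ≤ 2 := by
  have h := Nat.ceil_lt_add_one (inv_nonneg.2 hη0.le)
  have : η⁻¹ * η = 1 := inv_mul_cancel₀ hη0.ne'
  nlinarith

lemma pow_lt_one_add_pow_natCeil_inv {η : ℝ} (hη : 0 < η) (d : ℕ) :
    (81 : ℝ) ^ d < (1 + η) ^ (7 * (d + 1) * ⌈η⁻¹⌉₊) :=
  calc (81 : ℝ) ^ d < 128 ^ (d + 1) :=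
        (pow_le_pow_left₀ (by norm_num) (by norm_num) d).trans_lt
          (pow_lt_pow_right₀ (by norm_num) d.lt_succ_self)
    _ = 2 ^ (7 * (d + 1)) := by rw [pow_mul]; norm_num
    _ ≤ ((1 + η) ^ ⌈η⁻¹⌉₊) ^ (7 * (d + 1)) :=
        pow_le_pow_left₀ (by norm_num) (two_le_one_add_pow_natCeil_inv hη) _
    _ = (1 + η) ^ (7 * (d + 1) * ⌈η⁻¹⌉₊) := by rw [← pow_mul, mul_comm]

lemma div_le_regular_width {δ η : ℝ} (hδ : 0 < δ) (hη0 : 0 < η) (hη1 : η ≤ 1) (l d : ℕ) :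
    1 / 112 * δ * η / (l * d) ≤ δ / (2 * (7 * (d + 1) * ⌈η⁻¹⌉₊ : ℕ)) / (l + 1) := by
  have hm : 0 < ⌈η⁻¹⌉₊ := Nat.ceil_pos.2 (inv_pos.2 hη0)
  rcases l.eq_zero_or_pos with rfl | hl
  · simp only [CharP.cast_eq_zero, zero_mul, div_zero]; positivity
  rcases d.eq_zero_or_pos with rfl | hd
  · simp only [CharP.cast_eq_zero, mul_zero, div_zero]; positivity
  have hl' : (1 : ℝ) ≤ l := by exact_mod_cast hl
  have hd' : (1 : ℝ) ≤ d := by exact_mod_cast hd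
  have hmη := natCeil_inv_mul_le_two hη0 hη1
  rw [div_div, div_le_div_iff₀ (by positivity) (by positivity)]
  push_cast
  have key : (l + 1 : ℝ) * (d + 1) * (⌈η⁻¹⌉₊ * η) ≤ 8 * l * d := by
    nlinarith [mul_le_mul (by linarith : (l + 1 : ℝ) ≤ 2 * l) (by linarith : (d + 1 : ℝ) ≤ 2 * d)
      (by positivity) (by positivity)]
  nlinarith [mul_le_mul_of_nonneg_left key hδ.le]

theorem exists_regular_bohrSet_pair {G : Type*} [AddCommGroup G] [Finite G]
    (Γ : Finset (AddChar G ℂ)) {δ η : ℝ} (hδ : 0 < δ) (hη0 : 0 < η) (hη1 : η ≤ 1) (l : ℕ) :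
    ∃ δstar δ' : ℝ, δstar ∈ Set.Icc (δ / 2) δ ∧ 0 < δ' ∧
      1 / 112 * δ * η / (l * Γ.card) ≤ δ' ∧
      (Nat.card (bohrSet Γ δstar + iterSumset (bohrSet Γ δ') l) : ℝ) ≤
        (1 + η) * Nat.card (bohrSet Γ δstar) ∧
      iterSumset (bohrSet Γ δ') l ⊆ bohrSet Γ δstar := by
  set N := 7 * (Γ.card + 1) * ⌈η⁻¹⌉₊
  have hN : (0 : ℝ) < N := by
    have := Nat.ceil_pos.2 (inv_pos.2 hη0)
    positivity
  set ρ := δ / (2 * N)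
  have hρ : 0 < ρ := by positivity
  have hNρ : N * ρ = δ / 2 := by simp only [ρ]; field_simp
  obtain ⟨j, hj, hstep⟩ :=
    exists_natCard_bohrSet_step_le Γ hδ hη0.le (N := N)
      (pow_lt_one_add_pow_natCeil_inv hη0 Γ.card)
  have hjρ : j * ρ ≤ δ / 2 := by
    rw [← hNρ]; gcongr
  have hρ_le : ρ ≤ δ / 2 := by
    rw [← hNρ]; exact le_mul_of_one_le_left hρ.le (by exact_mod_cast hj.trans_le' j.zero_le)
  have hlδ' : l * (ρ / (l + 1)) ≤ ρ := by
    rw [mul_div_assoc', div_le_iff₀ (by positivity)]; nlinarith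
  refine ⟨δ / 2 + j * ρ, ρ / (l + 1), ⟨le_add_of_nonneg_right (by positivity), by linarith⟩,
    by positivity, div_le_regular_width hδ hη0 hη1 l Γ.card, ?_, ?_⟩
  · have hsub : bohrSet Γ (δ / 2 + j * ρ) + iterSumset (bohrSet Γ (ρ / (l + 1))) l ⊆
        bohrSet Γ (δ / 2 + (j + 1) * ρ) :=
      calc _ ⊆ bohrSet Γ (δ / 2 + j * ρ) + bohrSet Γ (l * (ρ / (l + 1))) :=
            Set.add_subset_add_left (iterSumset_bohrSet_subset _ l)
        _ ⊆ bohrSet Γ (δ / 2 + j * ρ + l * (ρ / (l + 1))) := bohrSet_add_bohrSet_subset _ _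
        _ ⊆ bohrSet Γ (δ / 2 + (j + 1) * ρ) := bohrSet_mono (by linarith)
    exact (Nat.cast_le.2 (Nat.card_mono (Set.toFinite _) hsub)).trans hstep
  · exact (iterSumset_bohrSet_subset _ l).trans (bohrSet_mono (by nlinarith))

/-- Regular pairs of Bohr sets: there are widths `δ* ∈ [δ/2,δ]` and
`δ' ≥ c·δη/(l·d)` with `μ_G(B(Γ,δ*) + l·B(Γ,δ')) ≤ (1+η)μ_G(B(Γ,δ*))` and
`l·B(Γ,δ') ⊆ B(Γ,δ*)`. -/
theorem bohr_regular : ∃ c : ℝ, 0 < c ∧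
    ∀ (G : Type) [AddCommGroup G] [Fintype G]
      (Γ : Finset (AddChar G ℂ)) (δ η : ℝ) (l : ℕ),
      δ ∈ Set.Ioc (0 : ℝ) 1 → η ∈ Set.Ioc (0 : ℝ) 1 →
      ∃ δstar δ' : ℝ, δstar ∈ Set.Icc (δ / 2) δ ∧ 0 < δ' ∧
        c * δ * η / (l * Γ.card) ≤ δ' ∧
        (Nat.card ({x : G | ∀ γ ∈ Γ, ‖γ x - 1‖ ≤ δstar} +
            iterSumset {x : G | ∀ γ ∈ Γ, ‖γ x - 1‖ ≤ δ'} l) : ℝ) /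
            Fintype.card G ≤
          (1 + η) *
            ((Nat.card {x : G | ∀ γ ∈ Γ, ‖γ x - 1‖ ≤ δstar} : ℝ) /
              Fintype.card G) ∧
        iterSumset {x : G | ∀ γ ∈ Γ, ‖γ x - 1‖ ≤ δ'} l ⊆
          {x : G | ∀ γ ∈ Γ, ‖γ x - 1‖ ≤ δstar} := by
  refine ⟨1 / 112, by norm_num, fun G _ _ Γ δ η l hδ hη => ?_⟩
  obtain ⟨δstar, δ', hstar, hδ', hlower, hcard, hsub⟩ :=
    exists_regular_bohrSet_pair Γ hδ.1 hη.1 hη.2 l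
  refine ⟨δstar, δ', hstar, hδ', hlower, ?_, hsub⟩
  rw [← mul_div_assoc]
  exact div_le_div_of_nonneg_right hcard (Nat.cast_nonneg _)
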